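/- arXiv:1406.1508 — 11 statements merged into one kernel-verified Lean document; each statement's English description precedes it below -/
import Mathlib

section
/- Let F be a field of characteristic 0 and let h ∈ F[x] be nonzero with factorization h = λ·u₁^{α₁}⋯u_t^{α_t} into distinct monic irreducible polynomials u_i and λ ∈ F*. Then for r ∈ F[x], h divides h'·r if and only if the radical u₁⋯u_t divides r. -/
/-!
If `h = p ^ a * q` with `p` separable (automatic for irreducibles in characteristic 0), `p`
coprime to `q` and `a ≠ 0` in the field, then `h' = p ^ (a - 1) * (a p' q + p q')` with the second
factor coprime to `p`, hence `p ^ a ∣ h' r ↔ p ∣ r`. Distinct monic irreducibles are pairwise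
coprime, so `h ∣ h' r` splits into these conditions, one for each prime power `u i ^ α i`.
-/

open Function Polynomial

theorem Fintype.prod_dvd_iff_of_coprime {ι R : Type*} [CommSemiring R] [Fintype ι]
    {s : ι → R} {z : R} (hs : Pairwise (IsCoprime on s)) :
    (∏ i, s i) ∣ z ↔ ∀ i, s i ∣ z :=
  ⟨fun h i => (Finset.dvd_prod_of_mem s (Finset.mem_univ i)).trans h,
    Fintype.prod_dvd_of_coprime hs⟩

namespace Polynomial

variable {K : Type*} [Field K]

theorem Monic.isCoprime_of_irreducible_of_ne {p q : K[X]} (hp : p.Monic) (hq : q.Monic)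
    (hp_irr : Irreducible p) (hq_irr : Irreducible q) (hne : p ≠ q) : IsCoprime p q :=
  hp_irr.coprime_iff_not_dvd.2 fun hdvd =>
    hne (eq_of_monic_of_associated hp hq (hp_irr.associated_of_dvd hq_irr hdvd))

theorem pow_dvd_derivative_pow_mul_mul_iff {p q r : K[X]} (hp : p.Separable)
    (hpq : IsCoprime p q) {a : ℕ} (ha : (a : K) ≠ 0) :
    p ^ a ∣ derivative (p ^ a * q) * r ↔ p ∣ r := by
  obtain _ | n := a
  · exact absurd Nat.cast_zero ha
  set s := C ((n : K) + 1) * derivative p * q + p * derivative q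
  have hderiv : derivative (p ^ (n + 1) * q) * r = p ^ n * (s * r) := by
    rw [derivative_mul, derivative_pow_succ]
    ring
  have hunit : IsUnit (C ((n : K) + 1)) := isUnit_C.2 (Ne.isUnit (by exact_mod_cast ha))
  have hps : IsCoprime p s :=
    IsCoprime.add_mul_left_right
      (((isCoprime_mul_unit_left_right hunit _ _).2 hp).mul_right hpq) _
  rw [hderiv, pow_succ, mul_dvd_mul_iff_left (pow_ne_zero n hp.ne_zero)]
  exact ⟨hps.dvd_of_dvd_mul_left, fun h => h.mul_left s⟩

end Polynomial

/-- In characteristic 0, if `h = λ · u₁^{α₁} ⋯ u_t^{α_t}` with distinct monic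
irreducible `u_i` and `λ ≠ 0`, then `h ∣ h'·r` iff the radical `u₁⋯u_t` divides `r`. -/
theorem stmt2 {F : Type*} [Field F] [CharZero F] (t : ℕ) (u : Fin t → F[X])
    (humonic : ∀ i, (u i).Monic) (huirr : ∀ i, Irreducible (u i))
    (hudist : ∀ i j, i ≠ j → u i ≠ u j)
    (α : Fin t → ℕ) (hα : ∀ i, 1 ≤ α i) (lam : F) (hlam : lam ≠ 0)
    (h : F[X]) (hfact : h = C lam * ∏ i, u i ^ α i) :
    ∀ r : F[X], h ∣ derivative h * r ↔ (∏ i, u i) ∣ r := by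
  intro r
  have hcop : Pairwise (IsCoprime on u) := fun i j hij =>
    (humonic i).isCoprime_of_irreducible_of_ne (humonic j) (huirr i) (huirr j) (hudist i j hij)
  have hcop_pow : Pairwise (IsCoprime on fun i => u i ^ α i) := fun _ _ hij => (hcop hij).pow
  rw [hfact, derivative_C_mul, mul_assoc, mul_dvd_mul_iff_left (C_ne_zero.2 hlam),
    Fintype.prod_dvd_iff_of_coprime hcop_pow, Fintype.prod_dvd_iff_of_coprime hcop]
  refine forall_congr' fun i => ?_
  rw [← Finset.mul_prod_erase Finset.univ _ (Finset.mem_univ i)]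
  refine pow_dvd_derivative_pow_mul_mul_iff (huirr i).separable ?_
    (Nat.cast_ne_zero.2 (Nat.one_le_iff_ne_zero.1 (hα i)))
  exact IsCoprime.prod_right fun j hj => (hcop (Finset.ne_of_mem_erase hj).symm).pow_right
end

section
/- Let F be a field of characteristic p > 0. For every f ∈ F[x], the (p−1)-st formal derivative of f'·f^{p−1} equals −(f')^p, where f' is the formal derivative of f. -/
open Polynomial

/-!
Both sides are additive in `f`: the right side because of the Frobenius, the left side because
`(f + g)' (f + g)^(p-1) - f' f^(p-1) - g' g^(p-1)` is the derivative of
`((f + g)^p - f^p - g^p) / p`, which `D^(p-1)` sends to `D^p (…) = 0`. For a monomial `f`,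
Fermat's little theorem gives `f' f^(p-1) = (f')^p X^(p-1)`; a `p`-th power is a constant for `D`,
so `D^(p-1)` produces `(p-1)! (f')^p = -(f')^p` by Wilson's theorem.
-/

open Finset

namespace Nat

theorem choose_succ_succ_div_mul_succ {n j : ℕ} (h : n + 1 ∣ (n + 1).choose (j + 1)) :
    (n + 1).choose (j + 1) / (n + 1) * (j + 1) = n.choose j := by
  obtain ⟨c, hc⟩ := h
  rw [hc, Nat.mul_div_cancel_left _ n.succ_pos]
  apply Nat.eq_of_mul_eq_mul_left n.succ_pos
  rw [add_one_mul_choose_eq, hc, mul_assoc]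

theorem choose_succ_succ_div_mul_sub {n j : ℕ} (h : n + 1 ∣ (n + 1).choose (j + 1)) :
    (n + 1).choose (j + 1) / (n + 1) * (n - j) = n.choose (j + 1) := by
  obtain ⟨c, hc⟩ := h
  rw [hc, Nat.mul_div_cancel_left _ n.succ_pos]
  apply Nat.eq_of_mul_eq_mul_left n.succ_pos
  rw [mul_comm (n + 1) (n.choose _), choose_mul_succ_eq, hc, Nat.add_sub_add_right, mul_assoc]

end Nat

theorem CharP.wilsons_lemma {R : Type*} [Ring R] (p : ℕ) [Fact p.Prime] [CharP R p] :
    ((p - 1).factorial : R) = -1 := by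
  have h := congrArg (ZMod.castHom (dvd_refl p) R) (ZMod.wilsons_lemma (p := p))
  rwa [map_natCast, map_neg, map_one] at h

/-- `(a + b) ^ p = a ^ p + b ^ p + p * binomialCarry p a b` when `p` is prime. -/
def binomialCarry {A : Type*} [CommSemiring A] (p : ℕ) (a b : A) : A :=
  ∑ j ∈ range (p - 1), ((p.choose (j + 1) / p : ℕ) : A) * a ^ (j + 1) * b ^ (p - 1 - j)

namespace Polynomial

variable {R : Type*} [CommSemiring R]

theorem derivative_add_mul_add_pow_pred {p : ℕ} (hp : p.Prime) (f g : R[X]) :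
    derivative (f + g) * (f + g) ^ (p - 1) =
      derivative f * f ^ (p - 1) + derivative g * g ^ (p - 1) +
        derivative (binomialCarry p f g) := by
  obtain ⟨q, rfl⟩ : ∃ q, p = q + 1 := ⟨p - 1, (Nat.sub_add_cancel hp.one_le).symm⟩
  have hdvd : ∀ j ∈ range q, q + 1 ∣ (q + 1).choose (j + 1) := fun j hj =>
    hp.dvd_choose_self j.succ_ne_zero (by simpa using hj)
  have hcarry : derivative (binomialCarry (q + 1) f g) =
      derivative f * ∑ j ∈ range q, f ^ j * g ^ (q - j) * (q.choose j : R[X]) +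
        derivative g *
          ∑ j ∈ range q, f ^ (j + 1) * g ^ (q - (j + 1)) * (q.choose (j + 1) : R[X]) := by
    rw [binomialCarry, derivative_sum, mul_sum, mul_sum, ← sum_add_distrib]
    refine sum_congr rfl fun j hj => ?_
    simp only [derivative_mul, derivative_natCast, derivative_pow, zero_mul, zero_add,
      Nat.add_sub_cancel, Nat.sub_sub, C_eq_natCast]
    rw [← Nat.choose_succ_succ_div_mul_succ (hdvd j hj),
      ← Nat.choose_succ_succ_div_mul_sub (hdvd j hj)]
    push_cast
    ring
  have hf : (f + g) ^ q = f ^ q + ∑ j ∈ range q, f ^ j * g ^ (q - j) * (q.choose j : R[X]) := by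
    rw [add_pow, sum_range_succ, add_comm]
    simp
  have hg : (f + g) ^ q =
      g ^ q + ∑ j ∈ range q, f ^ (j + 1) * g ^ (q - (j + 1)) * (q.choose (j + 1) : R[X]) := by
    rw [add_pow, sum_range_succ', add_comm]
    simp
  calc derivative (f + g) * (f + g) ^ (q + 1 - 1)
      = derivative f * (f ^ q + ∑ j ∈ range q, f ^ j * g ^ (q - j) * (q.choose j : R[X])) +
        derivative g * (g ^ q + ∑ j ∈ range q, f ^ (j + 1) * g ^ (q - (j + 1)) *
          (q.choose (j + 1) : R[X])) := by
        rw [← hf, ← hg, Nat.add_sub_cancel, derivative_add, add_mul]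
    _ = _ := by
        rw [hcarry, Nat.add_sub_cancel]
        ring

theorem iterate_derivative_pow_char_mul (p : ℕ) [CharP R p] (g h : R[X]) (k : ℕ) :
    derivative^[k] (g ^ p * h) = g ^ p * derivative^[k] h := by
  induction k with
  | zero => rfl
  | succ k ih =>
    rw [Function.iterate_succ_apply', ih, derivative_mul, derivative_pow,
      C_eq_natCast, CharP.cast_eq_zero, zero_mul, zero_mul, zero_mul, zero_add,
      Function.iterate_succ_apply']

theorem iterate_derivative_eq_zero_of_charP {p : ℕ} [CharP R p] (hp : p ≠ 0) (f : R[X]) :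
    derivative^[p] f = 0 := by
  rw [← factorial_smul_hasseDeriv, LinearMap.smul_apply, nsmul_eq_mul,
    (CharP.cast_eq_zero_iff R[X] p _).2 (Nat.dvd_factorial hp.bot_lt le_rfl), zero_mul]

theorem derivative_monomial_mul_pow_pred {p : ℕ} [Fact p.Prime] [CharP R p] (n : ℕ) (c : R) :
    derivative (monomial n c) * monomial n c ^ (p - 1) =
      derivative (monomial n c) ^ p * X ^ (p - 1) := by
  have hp := (Fact.out : p.Prime)
  rcases n with _ | m
  · simp [hp.ne_zero]
  obtain ⟨q, rfl⟩ : ∃ q, p = q + 1 := ⟨p - 1, (Nat.sub_add_cancel hp.one_le).symm⟩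
  have fermat : ((m + 1 : ℕ) : R) ^ (q + 1) = (m + 1 : ℕ) := by
    rw [← frobenius_def, map_natCast]
  rw [derivative_monomial, Nat.add_sub_cancel, Nat.add_sub_cancel, ← C_mul_X_pow_eq_monomial,
    ← C_mul_X_pow_eq_monomial, mul_pow, mul_pow, ← C_pow, ← C_pow, mul_pow, fermat]
  simp only [C_mul, C_pow]
  ring

end Polynomial

/-- In characteristic `p > 0`, for every `f ∈ F[x]`, the `(p-1)`-st formal
derivative of `f' · f^{p-1}` equals `-(f')^p`. -/
theorem stmt3 {F : Type*} [Field F] (p : ℕ) (hp : p.Prime) [CharP F p] (f : F[X]) :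
    derivative^[p - 1] (derivative f * f ^ (p - 1)) = -(derivative f) ^ p := by
  have := Fact.mk hp
  induction f using Polynomial.induction_on' with
  | add f g hf hg =>
    have hcarry : derivative^[p - 1] (derivative (binomialCarry p f g)) = 0 := by
      rw [← Function.iterate_succ_apply, Nat.succ_eq_add_one, Nat.sub_add_cancel hp.one_le,
        iterate_derivative_eq_zero_of_charP hp.ne_zero]
    rw [derivative_add_mul_add_pow_pred hp, iterate_map_add, iterate_map_add, hf, hg, hcarry,
      derivative_add, add_pow_char, neg_add, add_zero]
  | monomial n c =>
    rw [derivative_monomial_mul_pow_pred, iterate_derivative_pow_char_mul,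
      iterate_derivative_X_pow_eq_C_mul, Nat.descFactorial_self, Nat.sub_self, pow_zero, mul_one,
      CharP.wilsons_lemma, map_neg, map_one, mul_neg_one]
end

section
/- Let F be a field of characteristic p > 0 and let h ∈ F[x] be nonzero. For v ∈ F[x], the polynomial v·h^{p−1} lies in the subring F[x^p] if and only if v'·h = v·h'. -/
/-!
Since `expand` has image exactly the polynomials with zero derivative in characteristic `p`,
the left side says `(v h^{p-1})' = 0`. In characteristic `p` the exponent `p - 1` acts as `-1`, so
`(v h^{p-1})' = h^{p-2} (v' h - v h')`, and `h^{p-2}` can be cancelled because `h ≠ 0`.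
-/

open Polynomial

namespace Polynomial

variable {R : Type*} [CommRing R] (p : ℕ) [CharP R p]

theorem derivative_expand_eq_zero (f : R[X]) : derivative (expand R p f) = 0 := by
  rw [derivative_expand, CharP.cast_eq_zero, zero_mul, mul_zero]

theorem exists_expand_eq_iff_derivative_eq_zero [NoZeroDivisors R] (hp : p ≠ 0) (f : R[X]) :
    (∃ w : R[X], expand R p w = f) ↔ derivative f = 0 := by
  constructor
  · rintro ⟨w, rfl⟩
    exact derivative_expand_eq_zero p w
  · intro hf
    exact ⟨contract p f, expand_contract p hf hp⟩

theorem derivative_mul_pow_pred_charP (hp : 2 ≤ p) (v h : R[X]) :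
    derivative (v * h ^ (p - 1)) = h ^ (p - 2) * (derivative v * h - v * derivative h) := by
  have hpred : ((p - 1 : ℕ) : R) = -1 := by
    rw [Nat.cast_sub (by omega), CharP.cast_eq_zero, Nat.cast_one, zero_sub]
  have hpow : h ^ (p - 1) = h ^ (p - 2) * h := by
    rw [← pow_succ]
    congr 1
    omega
  rw [derivative_mul, derivative_pow, hpred, C_neg, C_1,
    show p - 1 - 1 = p - 2 by omega, hpow]
  ring

end Polynomial

/-- In characteristic `p > 0` with `h ≠ 0`, `v·h^{p-1} ∈ F[x^p]` iff
`v'·h = v·h'`. -/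
theorem stmt4 {F : Type*} [Field F] (p : ℕ) (hp : p.Prime) [CharP F p]
    (h : F[X]) (hh : h ≠ 0) (v : F[X]) :
    (∃ w : F[X], Polynomial.expand F p w = v * h ^ (p - 1)) ↔
      derivative v * h = v * derivative h := by
  rw [exists_expand_eq_iff_derivative_eq_zero p hp.ne_zero,
    derivative_mul_pow_pred_charP p hp.two_le, mul_eq_zero, sub_eq_zero]
  exact or_iff_right (pow_ne_zero _ hh)
end

section
/- Let F be a field of characteristic 0 and 0 ≠ h ∈ F[x]. Let π = h / gcd(h, h'), so that h divides π·h'. Define δ₀ : F[x] → F[x] by δ₀(r) = (rπ)' − r·(π h'/h). Then the kernel of δ₀ is exactly F · (h/π). -/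
/-!
With `g = gcd(h, h')` we have `h = π g`, and `q := π h'/h` satisfies `g q = h' = (π g)'`.
Hence `g · δ₀(r) = π · W(g, r)`, where `W(a, b) = a b' - a' b` is the Wronskian, so `δ₀ r = 0`
exactly when `W(r, g) = 0`. Dividing `r` and `g` by their gcd gives a coprime pair with vanishing
Wronskian; each then divides its own derivative, so in characteristic 0 both are constants and
`r ∈ F · g = F · (h / π)`.
-/

open Polynomial

namespace Polynomial

theorem wronskian_mul_mul {R : Type*} [CommRing R] (d a b : R[X]) :
    wronskian (d * a) (d * b) = d ^ 2 * wronskian a b := by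
  simp only [wronskian, derivative_mul]
  ring

theorem exists_C_mul_of_isCoprime_of_wronskian_eq_zero {F : Type*} [Field F] [CharZero F]
    {a b : F[X]} (hcop : IsCoprime a b) (hb : b ≠ 0) (hw : wronskian a b = 0) :
    ∃ c : F, a = C c * b := by
  obtain ⟨ha', hb'⟩ := hcop.wronskian_eq_zero_iff.1 hw
  obtain ⟨a₀, rfl⟩ := natDegree_eq_zero.1 (derivative_eq_zero.1 ha')
  obtain ⟨b₀, rfl⟩ := natDegree_eq_zero.1 (derivative_eq_zero.1 hb')
  rw [ne_eq, C_eq_zero] at hb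
  exact ⟨a₀ / b₀, by rw [← C_mul, div_mul_cancel₀ _ hb]⟩

theorem wronskian_eq_zero_iff_exists_C_mul {F : Type*} [Field F] [CharZero F] [DecidableEq F]
    {g : F[X]} (hg : g ≠ 0) (r : F[X]) : wronskian r g = 0 ↔ ∃ c : F, r = C c * g := by
  refine ⟨fun hw => ?_, ?_⟩
  · set d := GCDMonoid.gcd r g
    have hd : d ≠ 0 := gcd_ne_zero_of_right hg
    have hr : r = d * (r / d) := (EuclideanDomain.mul_div_cancel' hd (gcd_dvd_left r g)).symm
    have hg' : g = d * (g / d) := (EuclideanDomain.mul_div_cancel' hd (gcd_dvd_right r g)).symm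
    have hw' : wronskian (r / d) (g / d) = 0 := by
      rw [hr, hg', wronskian_mul_mul] at hw
      exact (mul_eq_zero.1 hw).resolve_left (pow_ne_zero 2 hd)
    obtain ⟨c, hc⟩ := exists_C_mul_of_isCoprime_of_wronskian_eq_zero
      (isCoprime_div_gcd_div_gcd hg) (right_div_gcd_ne_zero hg) hw'
    refine ⟨c, ?_⟩
    rw [hr, hc, mul_left_comm, ← hg']
  · rintro ⟨c, rfl⟩
    simp only [wronskian, derivative_mul, derivative_C, zero_mul, zero_add]
    ring

end Polynomial

/-- characteristic 0, `h ≠ 0`, `π = h / gcd(h,h')`,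
`δ₀(r) = (rπ)' − r·(π h'/h)`.  Then `ker δ₀ = F·(h/π)`. -/
theorem stmt8 {F : Type*} [Field F] [CharZero F] [DecidableEq F]
    (h : F[X]) (hh : h ≠ 0)
    (π : F[X]) (hπ : π = h / EuclideanDomain.gcd h (derivative h))
    (δ₀ : F[X] → F[X])
    (hδ₀ : ∀ r, δ₀ r = derivative (r * π) - r * (π * derivative h / h)) :
    ∀ r : F[X], δ₀ r = 0 ↔ ∃ c : F, r = C c * (h / π) := by
  set g := EuclideanDomain.gcd h (derivative h)
  have hg : g ≠ 0 := fun hz => hh (EuclideanDomain.gcd_eq_zero_iff.1 hz).1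
  have hπg : π * g = h := by
    rw [hπ, mul_comm]
    exact EuclideanDomain.mul_div_cancel' hg (EuclideanDomain.gcd_dvd_left _ _)
  have hπ0 : π ≠ 0 := by rintro rfl; exact hh (by rw [← hπg, zero_mul])
  obtain ⟨q, hq⟩ : g ∣ derivative h := EuclideanDomain.gcd_dvd_right h (derivative h)
  have hq' : π * derivative h / h = q :=
    (EuclideanDomain.eq_div_of_mul_eq_right hh (by rw [hq, ← hπg]; ring)).symm
  have hhπ : h / π = g := (EuclideanDomain.eq_div_of_mul_eq_right hπ0 hπg).symm
  have hgq : g * q = derivative π * g + π * derivative g := by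
    rw [← hq, ← hπg, derivative_mul]
  have hδ₀g : ∀ r, g * δ₀ r = π * wronskian g r := fun r => by
    rw [hδ₀, hq', wronskian, derivative_mul]
    linear_combination (-r) * hgq
  intro r
  rw [hhπ, ← wronskian_eq_zero_iff_exists_C_mul hg, ← wronskian_neg_eq, neg_eq_zero,
    ← mul_eq_zero_iff_left hg, hδ₀g, mul_eq_zero_iff_left hπ0]
end

section
/- Let F be a field of characteristic 0 and 0 ≠ h ∈ F[x], with π = h / gcd(h, h') and δ₀(r) = (rπ)' − r·(π h'/h). Then for every r ∈ F[x], the polynomial h/π divides δ₀(r) if and only if h/π divides r. -/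
/-!
Write `g = gcd(h, h') = h / π` and `t = π h' / h`, so that `g t = h' = (g π)'`; then
`g · δ₀(s) = π · W(g, s)` with `W(g, s) = g s' - g' s` the Wronskian. Hence `g ∣ r` gives
`δ₀(r) = g π (r/g)'`, and conversely `g ∣ δ₀(r)` means `g² ∣ π W(g, r)`.
In characteristic 0 a prime `p` of multiplicity `e ≥ 1` in `h` has multiplicity `e - 1` in `h'`,
so it has multiplicity `k = e - 1` in `g` and exactly `1` in `π`. If `r = p^m u` with `m < k`, then
`p W(g, r) = p^(k+m) ((m - k) p' u v + p (⋯))` with `p` not dividing the bracket, so `π W(g, r)` has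
multiplicity `k + m < 2k`, which is impossible.
-/

open Polynomial

theorem Prime.le_of_pow_dvd_pow_mul {M : Type*} [CommMonoidWithZero M] [IsCancelMulZero M]
    {p d : M} (hp : Prime p) (hd : ¬ p ∣ d) {a b : ℕ} (H : p ^ a ∣ p ^ b * d) : a ≤ b :=
  (pow_dvd_pow_iff hp.ne_zero hp.not_isUnit).1 (hp.pow_dvd_of_dvd_mul_right a hd H)

theorem UniqueFactorizationMonoid.dvd_of_forall_prime_pow_mul_le {R : Type*}
    [CommMonoidWithZero R] [UniqueFactorizationMonoid R] {a b : R}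
    (ha : a ≠ 0) (hb : b ≠ 0)
    (H : ∀ (p : R) (k m : ℕ) (v u : R), Prime p → ¬ p ∣ v → ¬ p ∣ u →
      a = p ^ (k + 1) * v → b = p ^ m * u → k + 1 ≤ m) :
    a ∣ b := by
  rw [dvd_iff_emultiplicity_le ha]
  intro p hp
  refine emultiplicity_le_emultiplicity_iff.2 fun n hn => ?_
  obtain ⟨k, v, hv, rfl⟩ := WfDvdMonoid.max_power_factor ha hp.irreducible
  obtain ⟨m, u, hu, rfl⟩ := WfDvdMonoid.max_power_factor hb hp.irreducible
  have hnk := hp.le_of_pow_dvd_pow_mul hv hn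
  rcases k with _ | k
  · rw [Nat.le_zero.1 hnk, pow_zero]
    exact one_dvd _
  · exact (pow_dvd_pow p (hnk.trans (H p k m v u hp hv hu rfl rfl))).mul_right u

namespace Polynomial

theorem mul_derivative_pow_mul {R : Type*} [CommSemiring R] (p u : R[X]) (n : ℕ) :
    p * derivative (p ^ n * u) = p ^ n * (C (n : R) * derivative p * u + p * derivative u) := by
  rw [derivative_mul, derivative_pow]
  rcases n with _ | n
  · simp
  · rw [Nat.add_sub_cancel]
    ring

theorem mul_derivative_mul_sub_eq_mul_wronskian {R : Type*} [CommRing R] {g π t : R[X]}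
    (ht : g * t = derivative (g * π)) (s : R[X]) :
    g * (derivative (s * π) - s * t) = π * wronskian g s := by
  rw [derivative_mul] at ht
  rw [wronskian, derivative_mul]
  linear_combination (-s) * ht

variable {F : Type*} [Field F]

theorem _root_.Prime.not_dvd_derivative [CharZero F] {p : F[X]} (hp : Prime p) :
    ¬ p ∣ derivative p := fun h =>
  hp.not_isUnit (hp.irreducible.separable.isUnit_of_dvd' dvd_rfl h)

theorem _root_.Prime.not_dvd_C_mul_derivative_mul_add [CharZero F] {p u : F[X]} (hp : Prime p)
    (hu : ¬ p ∣ u) {c : F} (hc : c ≠ 0) (q : F[X]) :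
    ¬ p ∣ C c * derivative p * u + p * q := by
  rw [dvd_add_left (dvd_mul_right p q), mul_assoc, (isUnit_C.2 hc.isUnit).dvd_mul_left]
  exact hp.not_dvd_mul hp.not_dvd_derivative hu

variable [CharZero F] {p : F[X]}

theorem exists_derivative_pow_succ_mul_eq {u : F[X]} (hp : Prime p) (hu : ¬ p ∣ u) (e : ℕ) :
    ∃ w, derivative (p ^ (e + 1) * u) = p ^ e * w ∧ ¬ p ∣ w := by
  refine ⟨_, mul_left_cancel₀ hp.ne_zero ?_,
    hp.not_dvd_C_mul_derivative_mul_add hu (Nat.cast_ne_zero.2 e.succ_ne_zero) (derivative u)⟩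
  rw [mul_derivative_pow_mul]
  ring

theorem exists_mul_wronskian_pow_mul_eq {u v : F[X]} (hp : Prime p) (hu : ¬ p ∣ u)
    (hv : ¬ p ∣ v) {k m : ℕ} (hkm : k ≠ m) :
    ∃ c, p * wronskian (p ^ k * v) (p ^ m * u) = p ^ (k + m) * c ∧ ¬ p ∣ c := by
  refine ⟨_, ?_, hp.not_dvd_C_mul_derivative_mul_add (hp.not_dvd_mul hu hv)
    (sub_ne_zero.2 (Nat.cast_injective.ne hkm.symm)) (derivative u * v - u * derivative v)⟩
  have hu' := mul_derivative_pow_mul p u m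
  have hv' := mul_derivative_pow_mul p v k
  rw [wronskian, C_sub]
  linear_combination (p ^ k * v) * hu' - (p ^ m * u) * hv'

theorem le_of_sq_dvd_mul_wronskian_pow_mul {u v π₁ : F[X]} (hp : Prime p) (hu : ¬ p ∣ u)
    (hv : ¬ p ∣ v) (hπ₁ : ¬ p ∣ π₁) {k m : ℕ}
    (H : p ^ k * v * (p ^ k * v) ∣ p * π₁ * wronskian (p ^ k * v) (p ^ m * u)) : k ≤ m := by
  by_contra! hmk
  obtain ⟨c, hc, hpc⟩ := exists_mul_wronskian_pow_mul_eq hp hu hv hmk.ne'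
  have hdvd : p ^ (k + k) ∣ p ^ (k + m) * (π₁ * c) :=
    calc p ^ (k + k) ∣ p ^ k * v * (p ^ k * v) := Dvd.intro (v * v) (by ring)
      _ ∣ p * π₁ * wronskian (p ^ k * v) (p ^ m * u) := H
      _ = p ^ (k + m) * (π₁ * c) := by linear_combination π₁ * hc
  have := hp.le_of_pow_dvd_pow_mul (hp.not_dvd_mul hπ₁ hpc) hdvd
  omega

variable [DecidableEq F]

theorem exists_eq_pow_succ_mul_of_gcd_derivative_eq {h v : F[X]} (hh : h ≠ 0) (hp : Prime p)
    (hph : p ∣ h) (hv : ¬ p ∣ v) {k : ℕ}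
    (hg : EuclideanDomain.gcd h (derivative h) = p ^ k * v) :
    ∃ a, h = p ^ (k + 1) * a ∧ ¬ p ∣ a := by
  obtain ⟨e, a, ha, rfl⟩ := WfDvdMonoid.max_power_factor hh hp.irreducible
  rcases e with _ | e
  · rw [pow_zero, one_mul] at hph
    exact absurd hph ha
  obtain ⟨w, hw, hw'⟩ := exists_derivative_pow_succ_mul_eq hp ha e
  have hek : e ≤ k := hp.le_of_pow_dvd_pow_mul hv <| hg ▸ EuclideanDomain.dvd_gcd
    ((pow_dvd_pow p e.le_succ).mul_right a) (hw ▸ dvd_mul_right _ _)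
  have hke : k ≤ e := hp.le_of_pow_dvd_pow_mul hw' <|
    hw ▸ (dvd_mul_right _ v).trans (hg ▸ EuclideanDomain.gcd_dvd_right _ _)
  exact ⟨a, by rw [le_antisymm hek hke], ha⟩

theorem exists_eq_mul_of_gcd_derivative_mul_eq {h π v : F[X]} (hh : h ≠ 0) (hp : Prime p)
    (hv : ¬ p ∣ v) {k : ℕ} (hg : EuclideanDomain.gcd h (derivative h) = p ^ (k + 1) * v)
    (hgπ : EuclideanDomain.gcd h (derivative h) * π = h) :
    ∃ π₁, π = p * π₁ ∧ ¬ p ∣ π₁ := by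
  have hph : p ∣ h := hgπ ▸ hg ▸ ((dvd_pow_self p k.succ_ne_zero).mul_right v).mul_right π
  obtain ⟨a, rfl, ha⟩ := exists_eq_pow_succ_mul_of_gcd_derivative_eq hh hp hph hv hg
  rw [hg] at hgπ
  have hvπ : v * π = p * a :=
    mul_left_cancel₀ (pow_ne_zero (k + 1) hp.ne_zero) (by linear_combination hgπ)
  obtain ⟨π₁, rfl⟩ : p ∣ π := (hp.dvd_or_dvd ⟨a, hvπ⟩).resolve_left hv
  have hva : v * π₁ = a := mul_left_cancel₀ hp.ne_zero (by linear_combination hvπ)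
  exact ⟨π₁, rfl, fun hpπ₁ => ha (hva ▸ hpπ₁.mul_left v)⟩

end Polynomial

/-- characteristic 0, `h ≠ 0`, `π = h / gcd(h,h')`,
`δ₀(r) = (rπ)' − r·(π h'/h)`.  Then `h/π ∣ δ₀(r)` iff `h/π ∣ r`. -/
theorem stmt9 {F : Type*} [Field F] [CharZero F] [DecidableEq F]
    (h : F[X]) (hh : h ≠ 0)
    (π : F[X]) (hπ : π = h / EuclideanDomain.gcd h (derivative h))
    (δ₀ : F[X] → F[X])
    (hδ₀ : ∀ r, δ₀ r = derivative (r * π) - r * (π * derivative h / h)) :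
    ∀ r : F[X], (h / π) ∣ δ₀ r ↔ (h / π) ∣ r := by
  intro r
  set g := EuclideanDomain.gcd h (derivative h)
  have hg0 : g ≠ 0 := fun hg => hh (EuclideanDomain.gcd_eq_zero_iff.1 hg).1
  have hgπ : g * π = h :=
    hπ ▸ EuclideanDomain.mul_div_cancel' hg0 (EuclideanDomain.gcd_dvd_left _ _)
  have hπ0 : π ≠ 0 := by
    rintro rfl
    exact hh (by simpa using hgπ.symm)
  obtain ⟨t, ht⟩ : g ∣ derivative h := EuclideanDomain.gcd_dvd_right h (derivative h)
  have hlog : π * derivative h / h = t := by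
    rw [show π * derivative h = h * t by rw [ht, ← hgπ]; ring, mul_div_cancel_left₀ _ hh]
  have hδ₀g : ∀ s, g * δ₀ s = π * wronskian g s := fun s => by
    rw [hδ₀, hlog]
    exact mul_derivative_mul_sub_eq_mul_wronskian (by rw [hgπ, ht]) s
  rw [show h / π = g by rw [← hgπ, mul_div_cancel_right₀ _ hπ0]]
  constructor
  · intro hdvd
    rcases eq_or_ne r 0 with rfl | hr0
    · exact dvd_zero g
    have hsq : g * g ∣ π * wronskian g r := hδ₀g r ▸ mul_dvd_mul_left g hdvd
    refine UniqueFactorizationMonoid.dvd_of_forall_prime_pow_mul_le hg0 hr0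
      fun p k m v u hp hv hu hgk hrm => ?_
    obtain ⟨π₁, rfl, hπ₁⟩ := exists_eq_mul_of_gcd_derivative_mul_eq hh hp hv hgk hgπ
    rw [hgk, hrm] at hsq
    exact le_of_sq_dvd_mul_wronskian_pow_mul hp hu hv hπ₁ hsq
  · rintro ⟨s, rfl⟩
    refine ⟨π * derivative s, mul_left_cancel₀ hg0 ?_⟩
    rw [hδ₀g, wronskian, derivative_mul]
    ring
end

section
/- Let F be a field of characteristic 0. Then the Lie algebra Der_F(F[t]) of F-linear derivations of the polynomial ring F[t] is a simple Lie algebra: it is nonabelian and its only Lie ideals are 0 and itself. -/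
/-!
Every derivation of `F[X]` is `p • d/dX` for `p = D X`, and
`⁅p • d/dX, q • d/dX⁆ = (q' p - p' q) • d/dX`. Bracketing a nonzero `p • d/dX` in an ideal with
`d/dX` repeatedly differentiates `p`, down to a nonzero constant since the characteristic is `0`;
so `d/dX` lies in the ideal. Bracketing `d/dX` with `p • d/dX` then yields `-p' • d/dX`, and
every polynomial is a derivative, so the ideal is everything.
-/

open Polynomial

namespace Polynomial

theorem iterate_derivative_natDegree {R : Type*} [Semiring R] (p : R[X]) :
    derivative^[p.natDegree] p = C (p.natDegree.factorial • p.leadingCoeff) := by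
  have hconst : (derivative^[p.natDegree] p).natDegree = 0 := by
    simpa using natDegree_iterate_derivative p p.natDegree
  rw [eq_C_of_natDegree_eq_zero hconst, coeff_iterate_derivative, zero_add,
    Nat.descFactorial_self, leadingCoeff]

theorem derivative_surjective {F : Type*} [Field F] [CharZero F] :
    Function.Surjective (derivative : F[X] → F[X]) := by
  intro q
  induction q using Polynomial.induction_on' with
  | add f g hf hg =>
    obtain ⟨p, rfl⟩ := hf
    obtain ⟨r, rfl⟩ := hg
    exact ⟨p + r, derivative_add⟩
  | monomial n a =>
    refine ⟨monomial (n + 1) (a / (n + 1 : ℕ)), ?_⟩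
    rw [derivative_monomial, Nat.add_sub_cancel,
      div_mul_cancel₀ a (Nat.cast_ne_zero.2 n.succ_ne_zero)]

section CommRing

variable {R : Type*} [CommRing R]

theorem lie_mkDerivation (p q : R[X]) :
    ⁅mkDerivation R p, mkDerivation R q⁆ = mkDerivation R (derivative q * p - derivative p * q) :=
  derivation_ext <| by simp [Derivation.commutator_apply, mkDerivation_apply]

theorem mkDerivation_derivation_X (D : Derivation R R[X] R[X]) : mkDerivation R (D X) = D :=
  derivation_ext (mkDerivation_X R _)

theorem not_isLieAbelian_derivation [Nontrivial R] : ¬IsLieAbelian (Derivation R R[X] R[X]) := by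
  intro h
  have hlie := congrArg (· X) (h.trivial (mkDerivation R 1) (mkDerivation R X))
  simp [lie_mkDerivation] at hlie

variable {I : LieIdeal R (Derivation R R[X] R[X])}

theorem mkDerivation_derivative_mem {p : R[X]} (hp : mkDerivation R p ∈ I) :
    mkDerivation R (derivative p) ∈ I := by
  simpa [lie_mkDerivation] using I.lie_mem (x := mkDerivation R 1) hp

theorem mkDerivation_iterate_derivative_mem {p : R[X]} (hp : mkDerivation R p ∈ I) (k : ℕ) :
    mkDerivation R (derivative^[k] p) ∈ I := by
  induction k with
  | zero => exact hp
  | succ k ih => exact Function.iterate_succ_apply' derivative k p ▸ mkDerivation_derivative_mem ih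

end CommRing

section Field

variable {F : Type*} [Field F] [CharZero F] {I : LieIdeal F (Derivation F F[X] F[X])}

theorem mkDerivation_one_mem_of_ne_zero {p : F[X]} (hp0 : p ≠ 0) (hp : mkDerivation F p ∈ I) :
    mkDerivation F 1 ∈ I := by
  have hc : p.natDegree.factorial • p.leadingCoeff ≠ 0 := by
    rw [nsmul_eq_mul]
    exact mul_ne_zero (Nat.cast_ne_zero.2 p.natDegree.factorial_ne_zero)
      (leadingCoeff_ne_zero.2 hp0)
  have hmem := I.smul_mem (p.natDegree.factorial • p.leadingCoeff)⁻¹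
    (mkDerivation_iterate_derivative_mem hp p.natDegree)
  rwa [iterate_derivative_natDegree, ← mul_one (C _), ← smul_eq_C_mul, map_smul, smul_smul,
    inv_mul_cancel₀ hc, one_smul] at hmem

theorem eq_top_of_mkDerivation_one_mem (h : mkDerivation F 1 ∈ I) : I = ⊤ := by
  refine eq_top_iff.2 fun D _ => ?_
  obtain ⟨p, hp⟩ := derivative_surjective (-D X)
  simpa [lie_mkDerivation, hp, mkDerivation_derivation_X] using I.lie_mem (x := mkDerivation F p) h

end Field

end Polynomial

/-- In characteristic 0, the Lie algebra of `F`-linear derivations of `F[t]`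
(the Witt algebra) is a simple Lie algebra: nonabelian, with no Lie ideals besides `0` and
itself. -/
theorem stmt11 {F : Type*} [Field F] [CharZero F] :
    LieAlgebra.IsSimple F (Derivation F F[X] F[X]) := by
  refine ⟨fun I => or_iff_not_imp_left.2 fun hI => ?_, not_isLieAbelian_derivation⟩
  obtain ⟨D, hDI, hD0⟩ : ∃ D ∈ I, D ≠ 0 := by simpa [LieSubmodule.eq_bot_iff] using hI
  have hDX : D X ≠ 0 := fun h => hD0 (by rw [← mkDerivation_derivation_X D, h, map_zero])
  rw [← mkDerivation_derivation_X D] at hDI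
  exact eq_top_of_mkDerivation_one_mem (mkDerivation_one_mem_of_ne_zero hDX hDI)
end

section
/- Let F be a field of characteristic p > 0 and let u ∈ F[x] be a monic irreducible polynomial with u' ≠ 0. If r ∈ F[x] and u^{p−1} divides r', then u^p divides r'. -/
/-!
In characteristic `p` the coefficient of `X ^ (p - 1)` in a derivative `g'` is `p • (coeff g p) = 0`,
so a root of `g'` of multiplicity at least `p - 1` has multiplicity at least `p`; translating by
`taylor` moves any root to `0`. Over an algebraic closure `u` is separable, hence a product of
distinct linear factors whose `p`-th powers all divide `r'`.
-/

open Polynomial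

namespace Polynomial

theorem X_pow_dvd_derivative_of_X_pow_pred_dvd {R : Type*} [CommRing R] (p : ℕ) [CharP R p]
    {g : R[X]} (h : X ^ (p - 1) ∣ derivative g) : X ^ p ∣ derivative g := by
  rw [X_pow_dvd_iff] at h ⊢
  intro d hd
  rcases Nat.lt_or_ge d (p - 1) with hd' | hd'
  · exact h d hd'
  · have hdp : ((d + 1 : ℕ) : R) = p := congrArg Nat.cast (by omega)
    rw [coeff_derivative, ← Nat.cast_succ, hdp, CharP.cast_eq_zero, mul_zero]

theorem derivative_taylor {R : Type*} [CommRing R] (r : R) (f : R[X]) :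
    derivative (taylor r f) = taylor r (derivative f) := by
  simp [taylor_apply, derivative_comp]

theorem X_sub_C_pow_dvd_iff_X_pow_dvd_taylor {R : Type*} [CommRing R] (a : R) (n : ℕ)
    (f : R[X]) : (X - C a) ^ n ∣ f ↔ X ^ n ∣ taylor a f := by
  have hcoe : ⇑(taylorEquiv a) = taylor a := rfl
  rw [← map_dvd_iff (taylorEquiv a), map_pow, hcoe]
  simp [taylor_apply]

theorem X_sub_C_pow_dvd_derivative_of_pow_pred_dvd {R : Type*} [CommRing R] (p : ℕ) [CharP R p]
    (a : R) {g : R[X]} (h : (X - C a) ^ (p - 1) ∣ derivative g) :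
    (X - C a) ^ p ∣ derivative g := by
  rw [X_sub_C_pow_dvd_iff_X_pow_dvd_taylor, ← derivative_taylor] at h ⊢
  exact X_pow_dvd_derivative_of_X_pow_pred_dvd p h

theorem Separable.pow_dvd_derivative_of_pow_pred_dvd {K : Type*} [Field K] (p : ℕ) [CharP K p]
    {v g : K[X]} (hsep : v.Separable) (hsplit : v.Splits)
    (h : v ^ (p - 1) ∣ derivative g) : v ^ p ∣ derivative g := by
  classical
  rcases eq_or_ne (derivative g) 0 with h0 | h0
  · simp [h0]
  refine (hsplit.pow p).dvd_of_roots_le_roots (pow_ne_zero _ hsep.ne_zero) ?_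
  rw [Multiset.le_iff_count]
  intro a
  rw [roots_pow, Multiset.count_nsmul]
  by_cases ha : a ∈ v.roots
  · have hroot : X - C a ∣ v := dvd_iff_isRoot.mpr (isRoot_of_mem_roots ha)
    calc p * v.roots.count a ≤ p := by
          simpa using Nat.mul_le_mul_left p (count_roots_le_one hsep a)
      _ ≤ (derivative g).roots.count a := by
          rw [count_roots, le_rootMultiplicity_iff h0]
          exact X_sub_C_pow_dvd_derivative_of_pow_pred_dvd p a
            ((pow_dvd_pow_of_dvd hroot _).trans h)
  · simp [Multiset.count_eq_zero_of_notMem ha]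

end Polynomial

theorem stmt14_general {F : Type*} [Field F] (p : ℕ) [CharP F p]
    (u : F[X]) (huirr : Irreducible u)
    (hu' : derivative u ≠ 0) (r : F[X]) (hdvd : u ^ (p - 1) ∣ derivative r) :
    u ^ p ∣ derivative r := by
  let φ := algebraMap F (AlgebraicClosure F)
  have : CharP (AlgebraicClosure F) p := charP_of_injective_algebraMap φ.injective p
  have hsep : (u.map φ).Separable := ((separable_iff_derivative_ne_zero huirr).mpr hu').map
  rw [← map_dvd_map' φ, Polynomial.map_pow, ← derivative_map] at hdvd ⊢
  exact hsep.pow_dvd_derivative_of_pow_pred_dvd p (IsAlgClosed.splits _) hdvd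

/-- characteristic `p > 0`; if `u` is monic irreducible with `u' ≠ 0`
and `u^{p−1} ∣ r'`, then `u^p ∣ r'`. -/
theorem stmt14 {F : Type*} [Field F] (p : ℕ) (hp : p.Prime) [CharP F p]
    (u : F[X]) (humonic : u.Monic) (huirr : Irreducible u)
    (hu' : derivative u ≠ 0) (r : F[X]) (hdvd : u ^ (p - 1) ∣ derivative r) :
    u ^ p ∣ derivative r :=
  stmt14_general p u huirr hu' r hdvd
end

section
/- Let F be a field of characteristic p > 0 and let 0 ≠ w ∈ F[x^p]. If r ∈ F[x] and w divides r', then there exists s ∈ F[x] with r' = w·s'. Equivalently, the quotient F[x]/im(d/dx) is a torsion-free F[x^p]-module. -/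
/-!
In characteristic `p` a polynomial is a derivative exactly when its coefficients at the exponents
`n ≡ -1 (mod p)` vanish, i.e. when its component along `X ^ (p - 1) • F[X ^ p]` is zero.
Multiplication by an element of `F[X ^ p]` shifts exponents by multiples of `p`, so it commutes
with taking that component; as `F[X]` is a domain, `w * q` being a derivative with `w ≠ 0`
forces `q` to be a derivative.
-/

open Polynomial

namespace Polynomial

variable {R : Type*}

section Semiring

variable [Semiring R]

noncomputable def coeffFilter (P : ℕ → Prop) [DecidablePred P] (f : R[X]) : R[X] :=
  ∑ n ∈ f.support with P n, monomial n (f.coeff n)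

theorem coeff_coeffFilter (P : ℕ → Prop) [DecidablePred P] (f : R[X]) (n : ℕ) :
    (coeffFilter P f).coeff n = if P n then f.coeff n else 0 := by
  rw [coeffFilter, finsetSum_coeff]
  simp only [coeff_monomial, Finset.sum_ite_eq', Finset.mem_filter, mem_support_iff]
  by_cases h : f.coeff n = 0 <;> simp [h]

theorem coeffFilter_eq_zero_iff (P : ℕ → Prop) [DecidablePred P] (f : R[X]) :
    coeffFilter P f = 0 ↔ ∀ n, P n → f.coeff n = 0 := by
  simp only [Polynomial.ext_iff, coeff_coeffFilter, coeff_zero, ite_eq_right_iff]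

end Semiring

theorem coeffFilter_expand_mul [CommSemiring R] {p : ℕ} (hp : 0 < p)
    (P : ℕ → Prop) [DecidablePred P] (hP : ∀ a b, p ∣ a → (P (a + b) ↔ P b)) (w q : R[X]) :
    coeffFilter P (expand R p w * q) = expand R p w * coeffFilter P q := by
  ext n
  simp only [coeff_coeffFilter, coeff_mul, mul_ite, mul_zero, Finset.ite_sum_zero]
  refine Finset.sum_congr rfl fun ⟨a, b⟩ hab => ?_
  rw [Finset.HasAntidiagonal.mem_antidiagonal] at hab
  subst hab
  by_cases ha : p ∣ a
  · simp only [hP a b ha]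
  · simp [coeff_expand hp, ha]

end Polynomial

section CharP

variable {F : Type*} [Field F] (p : ℕ) [CharP F p]

theorem mem_range_derivative_iff (f : F[X]) :
    f ∈ LinearMap.range (derivative (R := F)) ↔ coeffFilter (fun n => p ∣ n + 1) f = 0 := by
  have hcast (n : ℕ) : ((n : F) + 1 = 0 ↔ p ∣ n + 1) := by
    exact_mod_cast CharP.cast_eq_zero_iff F p (n + 1)
  rw [coeffFilter_eq_zero_iff]
  constructor
  · rintro ⟨s, rfl⟩ n hn
    rw [coeff_derivative, (hcast n).2 hn, mul_zero]
  · intro hf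
    rw [f.as_sum_support]
    refine Submodule.sum_mem _ fun n hn => ⟨monomial (n + 1) (f.coeff n / (n + 1)), ?_⟩
    have hn1 : (n : F) + 1 ≠ 0 := fun h => mem_support_iff.1 hn (hf n ((hcast n).1 h))
    rw [derivative_monomial, Nat.add_sub_cancel, Nat.cast_add_one, div_mul_cancel₀ _ hn1]

end CharP

/-- characteristic `p > 0`; if `0 ≠ w ∈ F[x^p]` divides `r'`, then
`r' = w·s'` for some `s` — i.e. `F[x]/im(d/dx)` is torsion free over `F[x^p]`. -/
theorem stmt15 {F : Type*} [Field F] (p : ℕ) (hp : p.Prime) [CharP F p]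
    (w : F[X]) (hw : w ≠ 0) (hwp : ∃ w₀ : F[X], w = Polynomial.expand F p w₀)
    (r : F[X]) (hdvd : w ∣ derivative r) :
    ∃ s : F[X], derivative r = w * derivative s := by
  obtain ⟨q, hq⟩ := hdvd
  obtain ⟨w₀, rfl⟩ := hwp
  have hr : coeffFilter (fun n => p ∣ n + 1) (derivative r) = 0 :=
    (mem_range_derivative_iff p _).1 (LinearMap.mem_range_self _ r)
  have hshift (a b : ℕ) (ha : p ∣ a) : p ∣ a + b + 1 ↔ p ∣ b + 1 := by
    rw [add_assoc, Nat.dvd_add_right ha]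
  have hq' : coeffFilter (fun n => p ∣ n + 1) q = 0 := by
    rw [hq, coeffFilter_expand_mul hp.pos _ hshift] at hr
    exact (mul_eq_zero.1 hr).resolve_left hw
  obtain ⟨s, rfl⟩ := (mem_range_derivative_iff p q).2 hq'
  exact ⟨s, hq⟩
end

section
/- Let F be a field of characteristic p > 0 and 0 ≠ h ∈ F[x]. Then there is a unique monic polynomial ρ ∈ F[x^p] dividing h such that every monic divisor of h belonging to F[x^p] divides ρ; i.e., ρ is the unique monic divisor of h in F[x^p] of maximal degree. -/
/-!
Write `ρ = expand p w`; the candidates `w` are the `w` with `expand p w ∣ h`, of degree at most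
`deg h`. A ring homomorphism out of a Bézout domain preserves gcds (apply it to a Bézout
identity), hence, when injective, also lcms; so the candidates are closed under `lcm`, and a
monic candidate of maximal degree is divisible by every other candidate.
-/

open Polynomial

theorem associated_map_gcd {R S : Type*} [CommRing R] [IsBezout R] [GCDMonoid R] [CommRing S]
    [GCDMonoid S] (φ : R →+* S) (a b : R) : Associated (φ (gcd a b)) (gcd (φ a) (φ b)) := by
  refine associated_of_dvd_dvd (dvd_gcd (map_dvd φ (gcd_dvd_left a b))
    (map_dvd φ (gcd_dvd_right a b))) ?_
  obtain ⟨x, y, hxy⟩ := IsBezout.gcd_eq_sum a b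
  have hsum : gcd (φ a) (φ b) ∣ φ (IsBezout.gcd a b) := by
    rw [← hxy, map_add, map_mul, map_mul]
    exact dvd_add (dvd_mul_of_dvd_right (gcd_dvd_left _ _) _)
      (dvd_mul_of_dvd_right (gcd_dvd_right _ _) _)
  exact hsum.trans (map_dvd φ (IsBezout.associated_gcd_gcd R).dvd)

theorem map_lcm_dvd {R S : Type*} [CommRing R] [IsBezout R] [GCDMonoid R] [CommRing S]
    [GCDMonoid S] {φ : R →+* S} (hφ : Function.Injective φ) {a b : R} {c : S} (ha : φ a ∣ c)
    (hb : φ b ∣ c) : φ (lcm a b) ∣ c := by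
  by_cases hg : gcd a b = 0
  · obtain ⟨rfl, rfl⟩ := (gcd_eq_zero_iff a b).mp hg
    simpa using ha
  have hφg : φ (gcd a b) ≠ 0 := (map_ne_zero_iff φ hφ).mpr hg
  have hprod : Associated (φ (gcd a b) * φ (lcm a b)) (φ (gcd a b) * lcm (φ a) (φ b)) := by
    rw [← map_mul]
    refine ((gcd_mul_lcm a b).map φ).trans ?_
    rw [map_mul]
    exact (gcd_mul_lcm (φ a) (φ b)).symm.trans ((associated_map_gcd φ a b).symm.mul_right _)
  exact (hprod.of_mul_left (Associated.refl _) hφg).dvd.trans (lcm_dvd ha hb)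

namespace Polynomial

theorem exists_greatest_expand_dvd {F : Type*} [Field F] {p : ℕ} (hp : 0 < p) {h : F[X]}
    (hh : h ≠ 0) :
    ∃ w : F[X], w.Monic ∧ expand F p w ∣ h ∧ ∀ v, expand F p v ∣ h → v ∣ w := by
  classical
  set S := {w : F[X] | w.Monic ∧ expand F p w ∣ h}
  have hbdd : BddAbove (natDegree '' S) := by
    refine ⟨h.natDegree, ?_⟩
    rintro _ ⟨w, ⟨-, hwh⟩, rfl⟩
    calc w.natDegree ≤ w.natDegree * p := Nat.le_mul_of_pos_right _ hp
      _ = (expand F p w).natDegree := (natDegree_expand p w).symm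
      _ ≤ h.natDegree := natDegree_le_of_dvd hwh hh
  have hne : (natDegree '' S).Nonempty := ⟨0, 1, ⟨monic_one, by simp⟩, natDegree_one⟩
  obtain ⟨w, ⟨hw, hwh⟩, hdeg⟩ := Nat.sSup_mem hne hbdd
  refine ⟨w, hw, hwh, fun v hv => ?_⟩
  have hv0 : v ≠ 0 := by
    rintro rfl
    exact hh (zero_dvd_iff.mp (by simpa using hv))
  have hl0 : lcm w v ≠ 0 := lcm_ne_zero_iff.mpr ⟨hw.ne_zero, hv0⟩
  have hl : lcm w v ∈ S := by
    refine ⟨?_, map_lcm_dvd (expand_injective hp) hwh hv⟩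
    simpa only [normalize_lcm] using monic_normalize hl0
  have hwl : Associated w (lcm w v) :=
    associated_of_dvd_of_natDegree_le (dvd_lcm_left w v) hl0
      (hdeg ▸ le_csSup hbdd ⟨_, hl, rfl⟩)
  exact (dvd_lcm_right w v).trans hwl.symm.dvd

end Polynomial

theorem stmt16_general {F : Type*} [Field F] (p : ℕ) (hp : p.Prime)
    (h : F[X]) (hh : h ≠ 0) :
    ∃! ρ : F[X], ρ.Monic ∧ (∃ w : F[X], ρ = Polynomial.expand F p w) ∧ ρ ∣ h ∧
      ∀ d : F[X], d.Monic → (∃ w : F[X], d = Polynomial.expand F p w) → d ∣ h → d ∣ ρ := by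
  obtain ⟨w, hw, hwh, hmax⟩ := exists_greatest_expand_dvd hp.pos hh
  have hρ : (expand F p w).Monic := hw.expand hp.pos
  refine ⟨expand F p w, ⟨hρ, ⟨w, rfl⟩, hwh, ?_⟩, ?_⟩
  · rintro d - ⟨v, rfl⟩ hd
    exact _root_.map_dvd (expand F p) (hmax v hd)
  · rintro ρ ⟨hρ', ⟨v, rfl⟩, hvh, hρmax⟩
    exact eq_of_monic_of_associated hρ' hρ
      (associated_of_dvd_dvd (_root_.map_dvd (expand F p) (hmax v hvh))
        (hρmax _ hρ ⟨w, rfl⟩ hwh))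

/-- characteristic `p > 0`, `h ≠ 0`: there is a unique monic `ρ ∈ F[x^p]`
dividing `h` such that every monic divisor of `h` lying in `F[x^p]` divides `ρ`. -/
theorem stmt16 {F : Type*} [Field F] (p : ℕ) (hp : p.Prime) [CharP F p]
    (h : F[X]) (hh : h ≠ 0) :
    ∃! ρ : F[X], ρ.Monic ∧ (∃ w : F[X], ρ = Polynomial.expand F p w) ∧ ρ ∣ h ∧
      ∀ d : F[X], d.Monic → (∃ w : F[X], d = Polynomial.expand F p w) → d ∣ h → d ∣ ρ :=
  stmt16_general p hp h hh
end

section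
/- Let F be a field of characteristic p > 0 and 0 ≠ h ∈ F[x]. Write h^{p−1} = ∑_{i=0}^{p−1} h̄_i x^i with h̄_i ∈ F[x^p]. Consider the F[x^p]-linear map θ : F[x] → F[x^p] given by θ(r) = (r·h^{p−1})^{(p−1)} (the (p−1)-st formal derivative). Then the image of θ is the ideal of F[x^p] generated by gcd(h̄_0, …, h̄_{p−1}), and the kernel of θ is a free F[x^p]-module of rank p−1. -/
/-!
Write `r = ∑_{j<p} r_j(x^p) x^j` and `h^(p-1) = ∑_i w_i(x^p) x^i`. In characteristic `p` the
derivative is `F[x^p]`-linear, and for `m ≤ 2p - 2` the `(p-1)`-st derivative of `x^m` vanishes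
unless `m = p - 1`, where it is `(p-1)! = -1` (Wilson). Hence `θ(r) = -∑_j r_j w_{p-1-j}`
evaluated at `x^p`: up to sign and the isomorphism `F[y] ≅ F[x^p]`, `θ` is the linear form
`c ↦ ∑_j c_j w_{p-1-j}` on `F[y]^p`. Over the principal ideal domain `F[y]` its image is generated
by the gcd of the `w_i` (Bézout), and its kernel is free, of rank `p - 1` by rank-nullity since
the image is a nonzero ideal.
-/

open Polynomial Finset Module

theorem Nat.dvd_descFactorial_of_sub_lt_of_le {n k d : ℕ} (hk : n - k < d) (hd : d ≤ n) :
    d ∣ n.descFactorial k := by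
  rw [← Nat.descFactorial_mul_descFactorial (show n - d + 1 ≤ k by omega),
    Nat.descFactorial_succ, Nat.sub_sub_self hd]
  exact Dvd.dvd.mul_left (dvd_mul_right d _) _

theorem CharP.cast_factorial_pred_eq_neg_one {R : Type*} [CommRing R] {p : ℕ} [CharP R p]
    (hp : p.Prime) :
    ((p - 1).factorial : R) = -1 := by
  have := Fact.mk hp
  have h := congrArg (ZMod.castHom dvd_rfl R) (ZMod.wilsons_lemma (p := p))
  rwa [map_natCast, map_neg, map_one] at h

namespace Polynomial

section ExpandCoord

variable {R : Type*} [CommSemiring R]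

theorem coeff_iterate_divX (f : R[X]) (k n : ℕ) : (divX^[k] f).coeff n = f.coeff (n + k) := by
  induction k generalizing n with
  | zero => rfl
  | succ k ih => rw [Function.iterate_succ_apply', coeff_divX, ih, add_right_comm, add_assoc]

/-- `expandCoord p r` are the coordinates of `r` in the basis `1, X, …, X^(p-1)` of `R[X]` over
`R[X^p]`, and `ofExpandCoord p` is the inverse map. -/
noncomputable def ofExpandCoord (p : ℕ) : (Fin p → R[X]) →+ R[X] where
  toFun c := ∑ j, expand R p (c j) * X ^ (j : ℕ)
  map_zero' := by simp
  map_add' c d := by simp only [Pi.add_apply, map_add, add_mul, Finset.sum_add_distrib]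

noncomputable def expandCoord (p : ℕ) (r : R[X]) (j : Fin p) : R[X] := contract p (divX^[j] r)

variable {p : ℕ}

theorem ofExpandCoord_apply (c : Fin p → R[X]) :
    ofExpandCoord p c = ∑ j, expand R p (c j) * X ^ (j : ℕ) := rfl

theorem ofExpandCoord_smul (a : R[X]) (c : Fin p → R[X]) :
    ofExpandCoord p (a • c) = expand R p a * ofExpandCoord p c := by
  simp only [ofExpandCoord_apply, Pi.smul_apply, smul_eq_mul, map_mul, Finset.mul_sum, mul_assoc]

theorem coeff_ofExpandCoord (hp : 0 < p) (c : Fin p → R[X]) (k : ℕ) :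
    (ofExpandCoord p c).coeff k = (c ⟨k % p, Nat.mod_lt k hp⟩).coeff (k / p) := by
  rw [ofExpandCoord_apply, finsetSum_coeff, Finset.sum_eq_single ⟨k % p, Nat.mod_lt k hp⟩]
  · rw [coeff_mul_X_pow', if_pos (Nat.mod_le k p), coeff_expand hp, if_pos (Nat.dvd_sub_mod k),
      ← Nat.div_eq_sub_mod_div]
  · intro j _ hj
    rw [coeff_mul_X_pow', coeff_expand hp]
    split_ifs with hjk hdvd
    · refine absurd (Fin.ext ?_) hj
      exact (Nat.mod_eq_of_lt j.isLt).symm.trans ((Nat.modEq_iff_dvd' hjk).mpr hdvd)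
    · rfl
    · rfl
  · exact fun h => absurd (Finset.mem_univ _) h

theorem expandCoord_ofExpandCoord (hp : 0 < p) (c : Fin p → R[X]) :
    expandCoord p (ofExpandCoord p c) = c := by
  ext j n
  rw [expandCoord, coeff_contract hp.ne', coeff_iterate_divX, coeff_ofExpandCoord hp]
  congr 2
  · ext; simp [Nat.mod_eq_of_lt j.isLt]
  · rw [Nat.add_comm, Nat.add_mul_div_right _ _ hp, Nat.div_eq_of_lt j.isLt, zero_add]

theorem ofExpandCoord_expandCoord (hp : 0 < p) (r : R[X]) :
    ofExpandCoord p (expandCoord p r) = r := by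
  ext k
  rw [coeff_ofExpandCoord hp, expandCoord, coeff_contract hp.ne', coeff_iterate_divX,
    Nat.div_add_mod']

theorem eq_ofExpandCoord_iff (hp : 0 < p) {r : R[X]} {c : Fin p → R[X]} :
    r = ofExpandCoord p c ↔ expandCoord p r = c := by
  constructor
  · rintro rfl; exact expandCoord_ofExpandCoord hp c
  · rintro rfl; exact (ofExpandCoord_expandCoord hp r).symm

theorem expand_dvd_expand_iff (hp : p ≠ 0) {a b : R[X]} :
    expand R p a ∣ expand R p b ↔ a ∣ b := by
  refine ⟨fun ⟨q, hq⟩ => ⟨contract p q, ?_⟩, _root_.map_dvd _⟩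
  rw [← contract_expand p hp (f := b), hq, mul_comm, contract_mul_expand hp, mul_comm]

end ExpandCoord

section Derivative

variable {R : Type*} [CommRing R] {p : ℕ} [CharP R p]

theorem derivative_expand_mul (a f : R[X]) :
    derivative (expand R p a * f) = expand R p a * derivative f := by
  rw [derivative_mul, derivative_expand, (CharP.cast_eq_zero_iff R[X] p p).mpr dvd_rfl]
  ring

theorem iterate_derivative_expand_mul (a f : R[X]) (k : ℕ) :
    derivative^[k] (expand R p a * f) = expand R p a * derivative^[k] f := by
  induction k with
  | zero => rfl
  | succ k ih => rw [Function.iterate_succ_apply', ih, derivative_expand_mul,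
      Function.iterate_succ_apply']

theorem iterate_derivative_pred_X_pow (hp : p.Prime) {m : ℕ} (hm : m < 2 * p - 1) :
    derivative^[p - 1] (X ^ m : R[X]) = if m = p - 1 then -1 else 0 := by
  rw [iterate_derivative_X_pow_eq_natCast_mul]
  split_ifs with hmp
  · rw [hmp, Nat.descFactorial_self, ← C_eq_natCast, CharP.cast_factorial_pred_eq_neg_one hp]
    simp
  · rcases Nat.lt_or_gt_of_ne hmp with hlt | hgt
    · simp [Nat.descFactorial_eq_zero_iff_lt.mpr hlt]
    · rw [← C_eq_natCast, (CharP.cast_eq_zero_iff R p _).mpr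
        (Nat.dvd_descFactorial_of_sub_lt_of_le (by omega) (by omega)), C_0, zero_mul]

theorem iterate_derivative_pred_mul_ofExpandCoord (hp : p.Prime) (r : R[X]) (w : Fin p → R[X]) :
    derivative^[p - 1] (r * ofExpandCoord p w) =
      -expand R p (∑ j, expandCoord p r j * w j.rev) := by
  conv_lhs => rw [← ofExpandCoord_expandCoord hp.pos r]
  set c := expandCoord p r
  have hprod : ofExpandCoord p c * ofExpandCoord p w =
      ∑ j, ∑ i : Fin p, expand R p (c j * w i) * X ^ ((j : ℕ) + i) := by
    simp only [ofExpandCoord_apply, sum_mul_sum, map_mul, pow_add]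
    exact sum_congr rfl fun j _ => sum_congr rfl fun i _ => by ring
  have hrev : ∀ j i : Fin p, (j : ℕ) + i = p - 1 ↔ i = j.rev := by
    intro j i; rw [Fin.ext_iff, Fin.val_rev]; omega
  calc _ = ∑ j, ∑ i : Fin p,
          expand R p (c j * w i) * derivative^[p - 1] (X ^ ((j : ℕ) + i)) := by
        simp only [hprod, iterate_derivative_sum, iterate_derivative_expand_mul]
    _ = ∑ j, -expand R p (c j * w j.rev) := by
      refine sum_congr rfl fun j _ => ?_
      rw [sum_eq_single j.rev]
      · rw [iterate_derivative_pred_X_pow hp (by omega), if_pos ((hrev j _).2 rfl), mul_neg_one]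
      · intro i _ hi
        rw [iterate_derivative_pred_X_pow hp (by omega), if_neg (mt (hrev j i).1 hi), mul_zero]
      · simp
    _ = _ := by rw [map_sum, sum_neg_distrib]

end Derivative
end Polynomial

theorem Module.Basis.existsUnique_eq_sum_smul {R M ι : Type*} [Semiring R] [AddCommMonoid M]
    [Module R M] [Fintype ι] {K : Submodule R M} (b : Basis ι R K) {x : M} (hx : x ∈ K) :
    ∃! c : ι → R, x = ∑ i, c i • (b i : M) := by
  refine existsUnique_congr (fun c => ?_) |>.mp (b.equivFun.symm.bijective.existsUnique ⟨x, hx⟩)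
  rw [Basis.equivFun_symm_apply, eq_comm, Subtype.ext_iff, Submodule.coe_sum]
  simp

section LinearCombination

variable {R ι : Type*} [CommRing R] [Fintype ι]

theorem exists_sum_mul_eq_iff_gcd_dvd [IsBezout R] [NormalizedGCDMonoid R] (v : ι → R) (a : R) :
    (∃ c : ι → R, ∑ i, c i * v i = a) ↔ univ.gcd v ∣ a := by
  constructor
  · rintro ⟨c, rfl⟩
    exact dvd_sum fun i hi => dvd_mul_of_dvd_right (gcd_dvd hi) _
  · rintro ⟨k, rfl⟩
    obtain ⟨g, hg⟩ := univ.gcd_eq_sum_mul v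
    exact ⟨fun i => k * g i, by rw [hg, sum_mul]; exact sum_congr rfl fun i _ => by ring⟩

theorem finrank_ker_linearCombination [IsDomain R] [IsNoetherianRing R] {v : ι → R}
    (hv : v ≠ 0) :
    finrank R (LinearMap.ker (Fintype.linearCombination R v)) = Fintype.card ι - 1 := by
  classical
  set φ := Fintype.linearCombination R v
  have hrange : finrank R (LinearMap.range φ) = 1 := by
    refine le_antisymm ((Submodule.finrank_le _).trans (finrank_self R).le) ?_
    obtain ⟨i, hi⟩ := Function.ne_iff.mp hv
    refine Module.finrank_pos_iff_exists_ne_zero.mpr ⟨⟨v i, Pi.single i 1, ?_⟩, ?_⟩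
    · simp [φ, Fintype.linearCombination_apply, Pi.single_apply]
    · exact fun h => hi (congrArg Subtype.val h)
  have := Submodule.finrank_quotient_add_finrank (LinearMap.ker φ)
  rw [φ.quotKerEquivRange.finrank_eq, hrange, Module.finrank_fintype_fun_eq_card] at this
  omega

end LinearCombination

section Theta

variable {F : Type*} [Field F] {p : ℕ} [CharP F p]

theorem exists_iterate_derivative_pred_mul_eq_iff [DecidableEq F] (hp : p.Prime)
    (w : Fin p → F[X]) (f : F[X]) :
    (∃ r, derivative^[p - 1] (r * ofExpandCoord p w) = f) ↔
      ∃ c, f = expand F p c * expand F p (univ.gcd w) := by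
  have hgcd : univ.gcd (fun j : Fin p => w j.rev) = univ.gcd w := by
    rw [← Function.comp_def, ← gcd_image, image_univ_of_surjective Fin.rev_surjective]
  constructor
  · rintro ⟨r, rfl⟩
    obtain ⟨k, hk⟩ :=
      (exists_sum_mul_eq_iff_gcd_dvd (fun j : Fin p => w j.rev) _).mp ⟨expandCoord p r, rfl⟩
    exact ⟨-k, by rw [iterate_derivative_pred_mul_ofExpandCoord hp, hk, hgcd, map_neg, map_mul,
      neg_mul, mul_comm]⟩
  · rintro ⟨c, rfl⟩
    obtain ⟨d, hd⟩ := (exists_sum_mul_eq_iff_gcd_dvd (fun j : Fin p => w j.rev)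
      (-(univ.gcd w * c))).mpr (hgcd ▸ dvd_neg.mpr (dvd_mul_right _ _))
    exact ⟨ofExpandCoord p d, by rw [iterate_derivative_pred_mul_ofExpandCoord hp,
      expandCoord_ofExpandCoord hp.pos, hd, map_neg, neg_neg, map_mul, mul_comm]⟩

theorem exists_basis_ker_iterate_derivative_pred_mul (hp : p.Prime) {w : Fin p → F[X]}
    (hw : w ≠ 0) :
    ∃ b : Fin (p - 1) → F[X], (∀ j, derivative^[p - 1] (b j * ofExpandCoord p w) = 0) ∧
      ∀ r, derivative^[p - 1] (r * ofExpandCoord p w) = 0 →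
        ∃! c : Fin (p - 1) → F[X], r = ∑ j, expand F p (c j) * b j := by
  set φ := Fintype.linearCombination F[X] fun j : Fin p => w j.rev
  have hker : ∀ r, derivative^[p - 1] (r * ofExpandCoord p w) = 0 ↔
      expandCoord p r ∈ LinearMap.ker φ := fun r => by
    rw [iterate_derivative_pred_mul_ofExpandCoord hp, neg_eq_zero, expand_eq_zero hp.pos,
      LinearMap.mem_ker, Fintype.linearCombination_apply]
    simp only [smul_eq_mul]
  have hw' : (fun j : Fin p => w j.rev) ≠ 0 := fun h0 =>
    hw (funext fun i => by simpa using congrFun h0 i.rev)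
  let bK := finBasisOfFinrankEq F[X] (LinearMap.ker φ)
    (by rw [finrank_ker_linearCombination hw', Fintype.card_fin])
  refine ⟨fun k => ofExpandCoord p (bK k), fun k => (hker _).mpr ?_, fun r hr => ?_⟩
  · rw [expandCoord_ofExpandCoord hp.pos]
    exact (bK k).2
  have hsum : ∀ c : Fin (p - 1) → F[X], ∑ k, expand F p (c k) * ofExpandCoord p (bK k) =
      ofExpandCoord p (∑ k, c k • (bK k : Fin p → F[X])) := fun c => by
    simp only [map_sum, ofExpandCoord_smul]
  simp_rw [hsum, eq_ofExpandCoord_iff hp.pos]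
  exact bK.existsUnique_eq_sum_smul ((hker r).mp hr)

end Theta

/-- characteristic `p > 0`, `h ≠ 0`.  Write
`h^{p−1} = ∑_{i<p} h̄_i x^i` with `h̄_i ∈ F[x^p]`, and let
`θ(r) = (r·h^{p−1})^{(p−1)}`, an `F[x^p]`-linear map `F[x] → F[x^p]`.  Then the image of
`θ` is the ideal of `F[x^p]` generated by a gcd `g` (in `F[x^p]`) of the `h̄_i`, and the
kernel of `θ` is a free `F[x^p]`-module of rank `p−1`. -/
theorem stmt17 {F : Type*} [Field F] (p : ℕ) (hp : p.Prime) [CharP F p]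
    (h : F[X]) (hh : h ≠ 0) (hbar : Fin p → F[X])
    (hbarmem : ∀ i, ∃ w : F[X], hbar i = Polynomial.expand F p w)
    (hbarsum : h ^ (p - 1) = ∑ i : Fin p, hbar i * X ^ (i : ℕ)) :
    ∃ g : F[X],
      -- `g` is a gcd of the `h̄_i` inside the subring `F[x^p]`
      (∃ w : F[X], g = Polynomial.expand F p w) ∧
      (∀ i, g ∣ hbar i) ∧
      (∀ d : F[X], (∃ w : F[X], d = Polynomial.expand F p w) →
        (∀ i, d ∣ hbar i) → d ∣ g) ∧
      -- the image of `θ` is the ideal of `F[x^p]` generated by `g`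
      (∀ f : F[X],
        (∃ r : F[X], derivative^[p - 1] (r * h ^ (p - 1)) = f) ↔
          ∃ c : F[X], f = Polynomial.expand F p c * g) ∧
      -- the kernel of `θ` is free of rank `p−1` over `F[x^p]`
      ∃ b : Fin (p - 1) → F[X],
        (∀ j, derivative^[p - 1] (b j * h ^ (p - 1)) = 0) ∧
        ∀ r : F[X], derivative^[p - 1] (r * h ^ (p - 1)) = 0 →
          ∃! c : Fin (p - 1) → F[X],
            r = ∑ j : Fin (p - 1), Polynomial.expand F p (c j) * b j := by
  classical
  choose w hw using hbarmem
  have hH : h ^ (p - 1) = ofExpandCoord p w := by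
    rw [hbarsum, ofExpandCoord_apply]; simp only [hw]
  have hw0 : w ≠ 0 := fun h0 => pow_ne_zero _ hh (by rw [hH, h0, map_zero])
  refine ⟨expand F p (univ.gcd w), ⟨_, rfl⟩, fun i => ?_, ?_, ?_, ?_⟩
  · rw [hw i]
    exact _root_.map_dvd _ (gcd_dvd (mem_univ i))
  · rintro d ⟨e, rfl⟩ hd
    refine _root_.map_dvd _ (dvd_gcd fun i _ => (expand_dvd_expand_iff hp.ne_zero).mp ?_)
    exact hw i ▸ hd i
  · simpa only [hH] using exists_iterate_derivative_pred_mul_eq_iff hp w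
  · simpa only [hH] using exists_basis_ker_iterate_derivative_pred_mul hp hw0
end

section
/- Let F be a field of characteristic 0, and let A ⊆ End_F(F[x]) be the unital F-subalgebra generated by the multiplication operator X (multiplication by x) and the differentiation operator Y = d/dx (so YX − XY = 1, the Weyl algebra). Then every F-linear derivation of A is inner: for every derivation D : A → A there exists a ∈ A with D(b) = ab − ba for all b ∈ A. -/
open Polynomial

/-! Write `X` for multiplication by `x` and `Y` for `d/dx`, so `⁅Y, X⁆ = 1`. Since
`⁅Y ^ (j + 1), X⁆ = (j + 1) • Y ^ j` and every element of `A` is a combination of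
`p(X) * Y ^ j`, in characteristic `0` the map `⁅·, X⁆` is onto `A`; subtracting an inner
derivation we may assume `D X = 0`. Applying `D` to `⁅Y, X⁆ = 1` then shows that `D Y`
commutes with `X`, hence is multiplication by a polynomial `g`, and `D Y = ⁅Y, h(X)⁆` for an
antiderivative `h` of `g`. After subtracting a second inner derivation `D` kills both
generators, so it vanishes. -/

section Derivation

variable {F R : Type*} [CommRing F] [Ring R] [Algebra F R]

/-- Leibniz rule for a linear endomorphism; Mathlib's `Derivation` needs a commutative algebra. -/
def IsDerivation (D : R →ₗ[F] R) : Prop :=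
  ∀ a b, D (a * b) = D a * b + a * D b

namespace IsDerivation

variable {D E : R →ₗ[F] R}

theorem map_one_eq_zero (hD : IsDerivation D) : D 1 = 0 := by
  simpa using hD 1 1

theorem sub (hD : IsDerivation D) (hE : IsDerivation E) : IsDerivation (D - E) := by
  intro a b
  simp only [LinearMap.sub_apply, hD a b, hE a b]
  noncomm_ring

theorem add (hD : IsDerivation D) (hE : IsDerivation E) : IsDerivation (D + E) := by
  intro a b
  simp only [LinearMap.add_apply, hD a b, hE a b]
  noncomm_ring

theorem eq_zero_of_adjoin_eq_top (hD : IsDerivation D) {s : Set R}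
    (hs : Algebra.adjoin F s = ⊤) (h : ∀ z ∈ s, D z = 0) : D = 0 := by
  ext b
  have hb : b ∈ Algebra.adjoin F s := hs ▸ Algebra.mem_top
  induction hb using Algebra.adjoin_induction with
  | mem z hz => exact h z hz
  | algebraMap r =>
    rw [Algebra.algebraMap_eq_smul_one, map_smul, hD.map_one_eq_zero, smul_zero]
    rfl
  | add u w _ _ hu hw => simp [hu, hw]
  | mul u w _ _ hu hw => simp_all [hD u w]

theorem lie_map_eq_zero_of_lie_eq_one (hD : IsDerivation D) {x y : R} (hyx : ⁅y, x⁆ = 1)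
    (hx : D x = 0) : ⁅D y, x⁆ = 0 := by
  have h := congrArg D hyx
  rwa [Ring.lie_def, map_sub, hD, hD, hx, hD.map_one_eq_zero, mul_zero, zero_mul, add_zero,
    zero_add, ← Ring.lie_def] at h

end IsDerivation

theorem Ring.smul_lie (c : F) (a b : R) : ⁅c • a, b⁆ = c • ⁅a, b⁆ := by
  simp only [Ring.lie_def, smul_mul_assoc, mul_smul_comm, smul_sub]

theorem mul_lie_of_lie_eq_zero {a b x : R} (ha : ⁅a, x⁆ = 0) :
    ⁅a * b, x⁆ = a * ⁅b, x⁆ := by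
  rw [Ring.lie_def] at ha ⊢
  rw [Ring.lie_def, mul_sub, mul_assoc, ← mul_assoc x, ← sub_eq_zero.1 ha, mul_assoc]

variable (F) in
def innerDerivation (a : R) : R →ₗ[F] R :=
  LinearMap.mulLeft F a - LinearMap.mulRight F a

@[simp]
theorem innerDerivation_apply (a b : R) : innerDerivation F a b = ⁅a, b⁆ := rfl

theorem isDerivation_innerDerivation (a : R) : IsDerivation (innerDerivation F a) := by
  intro b c
  simp only [innerDerivation_apply, Ring.lie_def]
  noncomm_ring

theorem IsDerivation.exists_eq_lie {D : R →ₗ[F] R} (hD : IsDerivation D) {x y : R}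
    (hyx : ⁅y, x⁆ = 1) (hgen : Algebra.adjoin F {x, y} = ⊤)
    (hsurj : ∀ c : R, ∃ b : R, ⁅b, x⁆ = c)
    (hcent : ∀ t : R, ⁅t, x⁆ = 0 → ∃ u : R, ⁅u, x⁆ = 0 ∧ ⁅y, u⁆ = t) :
    ∃ a : R, ∀ b, D b = ⁅a, b⁆ := by
  obtain ⟨a₁, ha₁⟩ := hsurj (D x)
  set D₁ := D - innerDerivation F a₁
  have hD₁ : IsDerivation D₁ := hD.sub (isDerivation_innerDerivation a₁)
  have hD₁x : D₁ x = 0 := by simp [D₁, ha₁]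
  obtain ⟨a₂, ha₂x, ha₂y⟩ :=
    hcent (D₁ y) (hD₁.lie_map_eq_zero_of_lie_eq_one hyx hD₁x)
  have hD₂ : D₁ + innerDerivation F a₂ = 0 := by
    refine (hD₁.add (isDerivation_innerDerivation a₂)).eq_zero_of_adjoin_eq_top hgen ?_
    rintro z (rfl | rfl)
    · simp [hD₁x, ha₂x]
    · rw [LinearMap.add_apply, ← ha₂y, innerDerivation_apply, Ring.lie_def, Ring.lie_def]
      abel
  refine ⟨a₁ - a₂, fun b => ?_⟩
  have := LinearMap.congr_fun hD₂ b
  simp only [D₁, LinearMap.add_apply, LinearMap.sub_apply, innerDerivation_apply,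
    LinearMap.zero_apply] at this
  rw [← sub_eq_zero, ← this, Ring.lie_def, Ring.lie_def, Ring.lie_def]
  noncomm_ring

end Derivation

theorem Algebra.toSubmodule_adjoin_le_of_mul_mem {R A : Type*} [CommSemiring R] [Semiring A]
    [Algebra R A] {s : Set A} {M : Submodule R A} (h1 : 1 ∈ M)
    (hmul : ∀ z ∈ s, ∀ m ∈ M, z * m ∈ M) :
    Subalgebra.toSubmodule (Algebra.adjoin R s) ≤ M := by
  rw [Algebra.adjoin_eq_span, Submodule.span_le]
  intro w hw
  induction hw using Submonoid.closure_induction_left with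
  | one => exact h1
  | mul_left z hz m _ ih => exact hmul z hz m ih

theorem Algebra.adjoin_mk_pair_eq_top {R A : Type*} [CommSemiring R] [Semiring A] [Algebra R A]
    (x y : A) :
    Algebra.adjoin R ({⟨x, subset_adjoin (Set.mem_insert x {y})⟩,
      ⟨y, subset_adjoin (Set.mem_insert_of_mem x rfl)⟩} : Set (Algebra.adjoin R {x, y})) =
      ⊤ := by
  convert Algebra.adjoin_adjoin_coe_preimage (R := R) (s := {x, y})
  ext z
  simp [Subtype.ext_iff]

theorem Polynomial.derivative_surjective_s18 {F : Type*} [Field F] [CharZero F] :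
    Function.Surjective (derivative : F[X] → F[X]) := by
  intro p
  induction p using Polynomial.induction_on' with
  | add p q hp hq =>
    obtain ⟨a, rfl⟩ := hp
    obtain ⟨b, rfl⟩ := hq
    exact ⟨a + b, derivative_add⟩
  | monomial n a =>
    refine ⟨monomial (n + 1) (a / (n + 1)), ?_⟩
    rw [derivative_monomial, Nat.add_sub_cancel, Nat.cast_add_one,
      div_mul_cancel₀ _ (Nat.cast_add_one_ne_zero n)]

section WeylAlgebra

variable {F : Type*}

local notation "𝕏" => LinearMap.mulLeft F (X : F[X])
local notation "𝔻" => (derivative : Module.End F F[X])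
local notation "𝒲" => Algebra.adjoin F ({𝕏, 𝔻} : Set (Module.End F F[X]))

section CommRing

variable [CommRing F]

theorem lie_derivative_mulLeft (p : F[X]) :
    ⁅𝔻, LinearMap.mulLeft F p⁆ = LinearMap.mulLeft F (derivative p) := by
  refine LinearMap.ext fun f => ?_
  simp [Ring.lie_def, derivative_mul]

theorem lie_derivative_mulX : ⁅𝔻, 𝕏⁆ = 1 := by
  rw [lie_derivative_mulLeft, derivative_X, LinearMap.mulLeft_one, Module.End.one_eq_id]

theorem lie_derivative_pow_succ_mulX (n : ℕ) :
    ⁅𝔻 ^ (n + 1), 𝕏⁆ = (n + 1) • 𝔻 ^ n := by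
  refine LinearMap.ext fun f => ?_
  simp [Ring.lie_def, Module.End.pow_apply, mul_comm X, iterate_derivative_mul_X]
  ring

theorem lie_mulLeft_mulX (p : F[X]) : ⁅LinearMap.mulLeft F p, 𝕏⁆ = 0 := by
  refine LinearMap.ext fun f => ?_
  simp [Ring.lie_def, mul_left_comm]

theorem mulLeft_mem_adjoin_mulX (p : F[X]) : LinearMap.mulLeft F p ∈ Algebra.adjoin F {𝕏} := by
  have : aeval 𝕏 p = LinearMap.mulLeft F p := by
    rw [show 𝕏 = Algebra.lmul F F[X] X from rfl, aeval_algHom_apply, aeval_X_left_apply]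
    rfl
  exact this ▸ aeval_mem_adjoin_singleton F 𝕏

theorem mulLeft_mem_weyl (p : F[X]) : LinearMap.mulLeft F p ∈ 𝒲 :=
  Algebra.adjoin_mono (by simp) (mulLeft_mem_adjoin_mulX p)

theorem eq_mulLeft_of_lie_mulX_eq_zero {v : Module.End F F[X]} (hv : ⁅v, 𝕏⁆ = 0) :
    v = LinearMap.mulLeft F (v 1) := by
  refine LinearMap.ext fun p => ?_
  have hcomm : Commute v (LinearMap.mulLeft F p) :=
    Algebra.commute_of_mem_adjoin_singleton_of_commute (mulLeft_mem_adjoin_mulX p)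
      (commute_iff_lie_eq.2 hv)
  simpa [mul_comm] using LinearMap.congr_fun hcomm.eq 1

theorem toSubmodule_weyl_le_span :
    Subalgebra.toSubmodule 𝒲 ≤ Submodule.span F
      (Set.range fun pj : F[X] × ℕ => LinearMap.mulLeft F pj.1 * 𝔻 ^ pj.2) := by
  set S := Set.range fun pj : F[X] × ℕ => LinearMap.mulLeft F pj.1 * 𝔻 ^ pj.2
  have hS (p : F[X]) (j : ℕ) : LinearMap.mulLeft F p * 𝔻 ^ j ∈ Submodule.span F S :=
    Submodule.subset_span ⟨(p, j), rfl⟩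
  refine Algebra.toSubmodule_adjoin_le_of_mul_mem (by simpa [← Module.End.one_eq_id] using hS 1 0)
    fun z hz m hm => ?_
  suffices Submodule.span F S ≤ (Submodule.span F S).comap (LinearMap.mulLeft F z) from this hm
  rw [Submodule.span_le]
  rintro _ ⟨⟨p, j⟩, rfl⟩
  rcases hz with rfl | rfl
  · have : 𝕏 * (LinearMap.mulLeft F p * 𝔻 ^ j) = LinearMap.mulLeft F (X * p) * 𝔻 ^ j := by
      rw [LinearMap.mulLeft_mul, ← Module.End.mul_eq_comp, mul_assoc]
    simp only [SetLike.mem_coe, Submodule.mem_comap, LinearMap.mulLeft_apply, this]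
    exact hS (X * p) j
  · have : 𝔻 * (LinearMap.mulLeft F p * 𝔻 ^ j) =
        LinearMap.mulLeft F p * 𝔻 ^ (j + 1) + LinearMap.mulLeft F (derivative p) * 𝔻 ^ j := by
      have h := lie_derivative_mulLeft p
      rw [Ring.lie_def, sub_eq_iff_eq_add] at h
      rw [← mul_assoc, h, add_mul, mul_assoc, ← pow_succ', add_comm]
    simp only [SetLike.mem_coe, Submodule.mem_comap, LinearMap.mulLeft_apply, this]
    exact add_mem (hS p (j + 1)) (hS (derivative p) j)

end CommRing

section Field

variable [Field F] [CharZero F]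

theorem exists_mem_weyl_lie_mulX_eq {c : Module.End F F[X]} (hc : c ∈ 𝒲) :
    ∃ b ∈ 𝒲, ⁅b, 𝕏⁆ = c := by
  suffices Subalgebra.toSubmodule 𝒲 ≤
      (Subalgebra.toSubmodule 𝒲).map (LinearMap.mulRight F 𝕏 - LinearMap.mulLeft F 𝕏) by
    obtain ⟨b, hb, rfl⟩ := this hc
    exact ⟨b, hb, rfl⟩
  refine toSubmodule_weyl_le_span.trans (Submodule.span_le.2 ?_)
  rintro _ ⟨⟨p, j⟩, rfl⟩
  have hj : ((j + 1 : ℕ) : F) ≠ 0 := Nat.cast_ne_zero.2 j.succ_ne_zero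
  set m : Module.End F F[X] := LinearMap.mulLeft F p
  have hb : m * 𝔻 ^ (j + 1) ∈ 𝒲 :=
    mul_mem (mulLeft_mem_weyl p) (pow_mem (Algebra.subset_adjoin (by simp)) _)
  refine ⟨((j + 1 : ℕ) : F)⁻¹ • (m * 𝔻 ^ (j + 1)), Subalgebra.smul_mem _ hb _, ?_⟩
  calc ⁅((j + 1 : ℕ) : F)⁻¹ • (m * 𝔻 ^ (j + 1)), 𝕏⁆
      = ((j + 1 : ℕ) : F)⁻¹ • (m * ⁅𝔻 ^ (j + 1), 𝕏⁆) :=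
        (Ring.smul_lie _ _ _).trans (congrArg _ (mul_lie_of_lie_eq_zero (lie_mulLeft_mulX p)))
    _ = m * 𝔻 ^ j := by
        rw [lie_derivative_pow_succ_mulX, mul_smul_comm, ← Nat.cast_smul_eq_nsmul F,
          inv_smul_smul₀ hj]

theorem exists_mem_weyl_lie_derivative_eq {v : Module.End F F[X]} (hv : ⁅v, 𝕏⁆ = 0) :
    ∃ u ∈ 𝒲, ⁅u, 𝕏⁆ = 0 ∧ ⁅𝔻, u⁆ = v := by
  obtain ⟨q, hq⟩ := derivative_surjective_s18 (v 1)
  refine ⟨LinearMap.mulLeft F q, mulLeft_mem_weyl q, lie_mulLeft_mulX q, ?_⟩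
  rw [lie_derivative_mulLeft, hq, ← eq_mulLeft_of_lie_mulX_eq_zero hv]

end Field

end WeylAlgebra

set_option synthInstance.maxHeartbeats 800000 in
set_option maxHeartbeats 1600000 in
/-- characteristic 0.  Let `A ⊆ End_F(F[x])` be the subalgebra generated by
multiplication by `x` and differentiation `d/dx` (the Weyl algebra).  Every `F`-linear
derivation of `A` is inner. -/
theorem stmt18 {F : Type*} [Field F] [CharZero F]
    (A : Subalgebra F (Module.End F F[X]))
    (hA : A = Algebra.adjoin F
      ({LinearMap.mulLeft F (X : F[X]), (derivative : F[X] →ₗ[F] F[X])} :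
        Set (Module.End F F[X])))
    (D : A →ₗ[F] A) (hD : ∀ a b : A, D (a * b) = D a * b + a * D b) :
    ∃ a : A, ∀ b : A, D b = a * b - b * a := by
  replace hD : IsDerivation (F := F) (R := A) D := hD
  subst hA
  refine hD.exists_eq_lie (x := ⟨_, Algebra.subset_adjoin (Set.mem_insert _ _)⟩)
    (y := ⟨_, Algebra.subset_adjoin (Set.mem_insert_of_mem _ rfl)⟩)
    (Subtype.ext lie_derivative_mulX) (Algebra.adjoin_mk_pair_eq_top _ _)
    (fun c => ?_) (fun t ht => ?_)
  · obtain ⟨b, hb, hbc⟩ := exists_mem_weyl_lie_mulX_eq c.2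
    exact ⟨⟨b, hb⟩, Subtype.ext hbc⟩
  · obtain ⟨u, hu, hux, huy⟩ := exists_mem_weyl_lie_derivative_eq (congrArg Subtype.val ht)
    exact ⟨⟨u, hu⟩, Subtype.ext hux, Subtype.ext huy⟩
end
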